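/- Let U be a vertex of the proper sum-essential graph N(M). Then deg(U) = 1 if and only if: (i) U is uniform and its complement in M is unique and semisimple, and (ii) for every simple submodule F ⊄ U, every nonzero f ∈ F, and every nonzero u ∈ U, there exists r ∈ R with ru = 0 and rf ≠ 0. -/

import Mathlib

variable {R : Type*} [Ring R] {M : Type*} [AddCommGroup M] [Module R M]

/-- `N` is an essential submodule of `M`: it intersects every nonzero submodule nontrivially. -/
def IsEssentialSubmodule (N : Submodule R M) : Prop :=
  ∀ B : Submodule R M, B ≠ ⊥ → N ⊓ B ≠ ⊥

/-- A vertex of the sum-essential graph `S(M)`: a nontrivial submodule. -/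
def IsVertexS (N : Submodule R M) : Prop := N ≠ ⊥ ∧ N ≠ ⊤

/-- Adjacency in the sum-essential graph `S(M)`. -/
def AdjS (A B : Submodule R M) : Prop :=
  IsVertexS A ∧ IsVertexS B ∧ A ≠ B ∧ IsEssentialSubmodule (A ⊔ B)

/-- A vertex of the proper sum-essential graph `N(M)`: a nontrivial non-essential submodule. -/
def IsVertexP (N : Submodule R M) : Prop :=
  N ≠ ⊥ ∧ N ≠ ⊤ ∧ ¬ IsEssentialSubmodule N

/-- Adjacency in the proper sum-essential graph `N(M)`. -/
def AdjP (A B : Submodule R M) : Prop :=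
  IsVertexP A ∧ IsVertexP B ∧ A ≠ B ∧ IsEssentialSubmodule (A ⊔ B)

/-- `U` is a uniform submodule: nonzero, and any two nonzero submodules of it intersect. -/
def UniformSubmodule (U : Submodule R M) : Prop :=
  U ≠ ⊥ ∧ ∀ A B : Submodule R M, A ≤ U → B ≤ U → A ≠ ⊥ → B ≠ ⊥ → A ⊓ B ≠ ⊥

/-- `C` is a complement of `U` in `M`: maximal with respect to `U ⊓ C = ⊥`. -/
def IsComplementOf (C U : Submodule R M) : Prop :=
  U ⊓ C = ⊥ ∧ ∀ D : Submodule R M, U ⊓ D = ⊥ → C ≤ D → D = C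

/-!
Let `C` be a complement of `U`. It is always a neighbour of `U`, and every `D` with
`U ⊓ D = ⊥` and `U ⊔ D` essential is one, so degree one means that `C` is the only such
`D`. Applied to suitable `D`, this forces uniformity of `U`, uniqueness of `C`, a complement
inside `C` for each of its submodules, and condition (ii): a failure of (ii) at `u` and `f`
makes `ru ↦ rf` a homomorphism, whose graph `R ∙ (u + f)`, enlarged by a complement of
`U ⊔ F`, is another neighbour. Conversely, a neighbour `X` disjoint from `U` is essential in
the semisimple `C`, hence equal to it, while a neighbour meeting `U` would, by uniformity,
miss a simple `F ≤ C`, and then (ii) shows that `U ⊔ X` misses `F` too.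
-/

theorem IsEssentialSubmodule.mono {A B : Submodule R M} (hA : IsEssentialSubmodule A)
    (hAB : A ≤ B) : IsEssentialSubmodule B :=
  fun X hX hBX => hA X hX (le_bot_iff.1 (hBX ▸ inf_le_inf_right X hAB))

theorem isEssentialSubmodule_top : IsEssentialSubmodule (⊤ : Submodule R M) :=
  fun B hB => by rwa [top_inf_eq]

theorem not_isEssentialSubmodule_of_disjoint {A B : Submodule R M} (hB : B ≠ ⊥)
    (hAB : Disjoint A B) : ¬ IsEssentialSubmodule A :=
  fun hA => hA B hB hAB.eq_bot

theorem exists_isComplementOf_ge {U E : Submodule R M} (hE : Disjoint U E) :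
    ∃ C, E ≤ C ∧ IsComplementOf C U := by
  obtain ⟨C, hEC, hUC, hmax⟩ := zorn_le_nonempty₀ {D : Submodule R M | Disjoint U D}
    (fun c hc hchain _ _ =>
      ⟨sSup c, hchain.directedOn.disjoint_sSup_right.2 fun _ hD => hc hD, fun _ => le_sSup⟩)
    E hE
  exact ⟨C, hEC, hUC.eq_bot, fun D hD hCD => le_antisymm (hmax (disjoint_iff.2 hD) hCD) hCD⟩

theorem IsComplementOf.disjoint {C U : Submodule R M} (hC : IsComplementOf C U) : Disjoint U C :=
  disjoint_iff.2 hC.1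

theorem IsComplementOf.isEssentialSubmodule_sup {C U : Submodule R M}
    (hC : IsComplementOf C U) : IsEssentialSubmodule (U ⊔ C) := by
  intro B hB hUCB
  have hUCB' : Disjoint U (C ⊔ B) :=
    hC.disjoint.disjoint_sup_right_of_disjoint_sup_left (disjoint_iff.2 hUCB)
  have hBC : B ≤ C := le_sup_right.trans (hC.2 _ hUCB'.eq_bot le_sup_left).le
  exact hB ((inf_eq_right.2 (hBC.trans le_sup_right)).symm.trans hUCB)

theorem AdjP.of_isEssentialSubmodule_sup {U X : Submodule R M} (hU : IsVertexP U)
    (hXU : X ≠ U) (hX : ¬ IsEssentialSubmodule X) (hUX : IsEssentialSubmodule (U ⊔ X)) :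
    AdjP U X := by
  refine ⟨hU, ⟨?_, ?_, hX⟩, hXU.symm, hUX⟩
  · rintro rfl
    exact hU.2.2 (by rwa [sup_bot_eq] at hUX)
  · rintro rfl
    exact hX isEssentialSubmodule_top

theorem AdjP.of_disjoint {U X : Submodule R M} (hU : IsVertexP U) (hUX : Disjoint U X)
    (hess : IsEssentialSubmodule (U ⊔ X)) : AdjP U X := by
  refine .of_isEssentialSubmodule_sup hU ?_ (not_isEssentialSubmodule_of_disjoint hU.1 hUX.symm)
    hess
  rintro rfl
  exact hU.1 (disjoint_self.1 hUX)

theorem IsComplementOf.adjP {C U : Submodule R M} (hU : IsVertexP U) (hC : IsComplementOf C U) :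
    AdjP U C :=
  .of_disjoint hU hC.disjoint hC.isEssentialSubmodule_sup

theorem isSemisimpleModule_submodule_iff {C : Submodule R M} :
    IsSemisimpleModule R C ↔ ∀ A ≤ C, ∃ G ≤ C, Disjoint A G ∧ A ⊔ G = C := by
  rw [isSemisimpleModule_iff, C.mapIic.complementedLattice_iff, complementedLattice_iff]
  constructor
  · intro h A hA
    obtain ⟨G, hAG⟩ := h ⟨A, hA⟩
    exact ⟨G, G.2, disjoint_iff.2 (congrArg Subtype.val hAG.disjoint.eq_bot),
      congrArg Subtype.val hAG.codisjoint.eq_top⟩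
  · rintro h ⟨A, hA⟩
    obtain ⟨G, hGC, hAG, hAGC⟩ := h A hA
    exact ⟨⟨G, hGC⟩, disjoint_iff.2 (Subtype.ext hAG.eq_bot),
      codisjoint_iff.2 (Subtype.ext hAGC)⟩

theorem exists_isAtom_le_of_isSemisimpleModule {B C : Submodule R M} [IsSemisimpleModule R C]
    (hBC : B ≤ C) (hB : B ≠ ⊥) : ∃ F ≤ B, IsAtom F := by
  have : IsSemisimpleModule R B :=
    .of_injective (Submodule.inclusion hBC) (Submodule.inclusion_injective hBC)
  obtain ⟨F, hFB, hF⟩ := (IsSemisimpleModule.eq_bot_or_exists_simple_le B).resolve_left hB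
  exact ⟨F, hFB, isSimpleModule_iff_isAtom.1 hF⟩

/-- Condition (ii) of the theorem. -/
def AnnihilatorSeparates (U : Submodule R M) : Prop :=
  ∀ F : Submodule R M, IsAtom F → ¬ F ≤ U →
    ∀ f ∈ F, f ≠ 0 → ∀ u ∈ U, u ≠ 0 → ∃ r : R, r • u = 0 ∧ r • f ≠ 0

theorem disjoint_span_add_of_forall_smul_eq_zero {u f : M} (huf : Disjoint (R ∙ u) (R ∙ f))
    (hann : ∀ r : R, r • u = 0 → r • f = 0) :
    Disjoint (R ∙ (u + f)) (R ∙ f) := by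
  rw [Submodule.disjoint_def]
  intro y hy hyf
  obtain ⟨r, rfl⟩ := Submodule.mem_span_singleton.1 hy
  obtain ⟨s, hs⟩ := Submodule.mem_span_singleton.1 hyf
  have hru : r • u = 0 := by
    refine Submodule.disjoint_def.1 huf _
      (Submodule.smul_mem _ r (Submodule.mem_span_singleton_self u)) ?_
    rw [show r • u = (s - r) • f by rw [sub_smul, hs, smul_add]; abel]
    exact Submodule.smul_mem _ _ (Submodule.mem_span_singleton_self f)
  rw [smul_add, hru, hann r hru, add_zero]

section UniqueNeighbour

variable {U C : Submodule R M}

theorem le_of_disjoint_of_forall_adjP_eq (hU : IsVertexP U) (huniq : ∀ X, AdjP U X → X = C)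
    {E : Submodule R M} (hE : Disjoint U E) : E ≤ C := by
  obtain ⟨D, hED, hD⟩ := exists_isComplementOf_ge hE
  exact huniq D (hD.adjP hU) ▸ hED

theorem uniformSubmodule_of_forall_adjP_eq (hU : IsVertexP U) (hC : IsComplementOf C U)
    (huniq : ∀ X, AdjP U X → X = C) : UniformSubmodule U := by
  refine ⟨hU.1, fun A B hAU hBU hA hB hAB => hA ?_⟩
  have hUC : Disjoint U C := hC.disjoint
  have hBAC : Disjoint B (A ⊔ C) :=
    (disjoint_iff.2 hAB).symm.disjoint_sup_right_of_disjoint_sup_left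
      (hUC.mono_left (sup_le hBU hAU))
  have hadj : AdjP U (A ⊔ C) := by
    refine .of_isEssentialSubmodule_sup hU ?_ (not_isEssentialSubmodule_of_disjoint hB hBAC.symm)
      (hC.isEssentialSubmodule_sup.mono (sup_le le_sup_left (le_sup_right.trans le_sup_right)))
    intro h
    exact hB ((h ▸ hBAC).eq_bot_of_le hBU)
  exact (hUC.mono_left hAU).eq_bot_of_le (le_sup_left.trans (huniq _ hadj).le)

theorem isSemisimpleModule_of_forall_adjP_eq (hU : IsVertexP U) (hC : IsComplementOf C U)
    (huniq : ∀ X, AdjP U X → X = C) : IsSemisimpleModule R C := by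
  refine isSemisimpleModule_submodule_iff.2 fun A hAC => ?_
  obtain ⟨K, -, hK⟩ := exists_isComplementOf_ge (U := U ⊔ A) disjoint_bot_right
  have hUAK : Disjoint (U ⊔ A) K := disjoint_iff.2 hK.1
  have hAK : A ⊔ K = C := by
    refine huniq _ (.of_disjoint hU ?_ ?_)
    · exact (hC.disjoint.mono_right hAC).disjoint_sup_right_of_disjoint_sup_left hUAK
    · rw [← sup_assoc]
      exact hK.isEssentialSubmodule_sup
  exact ⟨K, hAK ▸ le_sup_right, hUAK.mono_left le_sup_right, hAK⟩

theorem annihilatorSeparates_of_forall_adjP_eq (hU : IsVertexP U) (hC : IsComplementOf C U)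
    (huniq : ∀ X, AdjP U X → X = C) : AnnihilatorSeparates U := by
  intro F hF hFU f hf hf0 u hu hu0
  by_contra! hann
  have hUF : Disjoint U F := (hF.not_le_iff_disjoint.1 hFU).symm
  have hFf : R ∙ f = F :=
    (hF.le_iff_eq (by simpa using hf0)).1 ((Submodule.span_singleton_le_iff_mem f F).2 hf)
  obtain ⟨K, -, hK⟩ := exists_isComplementOf_ge (U := U ⊔ F) disjoint_bot_right
  set X := K ⊔ (R ∙ (u + f))
  have hufX : u + f ∈ X := Submodule.mem_sup_right (Submodule.mem_span_singleton_self _)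
  have hXF : Disjoint X F := by
    refine Disjoint.disjoint_sup_left_of_disjoint_sup_right ?_ ?_
    · exact hFf ▸ disjoint_span_add_of_forall_smul_eq_zero
        ((hFf ▸ hUF).mono_left ((Submodule.span_singleton_le_iff_mem u U).2 hu)) hann
    · refine (disjoint_iff.2 hK.1).symm.mono_right (sup_le ?_ le_sup_right)
      exact (Submodule.span_singleton_le_iff_mem _ _).2
        (add_mem (Submodule.mem_sup_left hu) (Submodule.mem_sup_right hf))
  have hFUX : F ≤ U ⊔ X := by
    rw [← hFf, Submodule.span_singleton_le_iff_mem]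
    simpa using sub_mem (Submodule.mem_sup_right (S := U) hufX) (Submodule.mem_sup_left hu)
  have hadj : AdjP U X := by
    refine .of_isEssentialSubmodule_sup hU ?_ (not_isEssentialSubmodule_of_disjoint hF.1 hXF)
      (hK.isEssentialSubmodule_sup.mono
        (sup_le (sup_le le_sup_left hFUX) (le_sup_left.trans le_sup_right)))
    intro h
    rw [h, sup_idem] at hFUX
    exact hF.1 (hUF.symm.eq_bot_of_le hFUX)
  have hfC : f ∈ C := le_of_disjoint_of_forall_adjP_eq hU huniq hUF hf
  have huC : u ∈ C := by simpa using sub_mem (huniq X hadj ▸ hufX : u + f ∈ C) hfC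
  exact hu0 (Submodule.disjoint_def.1 hC.disjoint u hu huC)

end UniqueNeighbour

section Converse

variable {U C X : Submodule R M}

theorem eq_of_adjP_of_disjoint (hC : IsComplementOf C U)
    (hCuniq : ∀ D, IsComplementOf D U → D = C) [IsSemisimpleModule R C] (hX : AdjP U X)
    (hUX : Disjoint U X) : X = C := by
  obtain ⟨D, hXD, hD⟩ := exists_isComplementOf_ge hUX
  have hXC : X ≤ C := hCuniq D hD ▸ hXD
  obtain ⟨G, hGC, hXG, hXGC⟩ := isSemisimpleModule_submodule_iff.1 ‹_› X hXC
  have hUXG : Disjoint (U ⊔ X) G :=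
    hXG.disjoint_sup_left_of_disjoint_sup_right (hXGC ▸ hC.disjoint)
  have hG : G = ⊥ := by
    by_contra hG
    exact hX.2.2.2 G hG hUXG.eq_bot
  rw [← hXGC, hG, sup_bot_eq]

theorem AnnihilatorSeparates.disjoint_sup (hsep : AnnihilatorSeparates U) {F : Submodule R M}
    (hF : IsAtom F) (hFU : ¬ F ≤ U) (hFX : Disjoint F X) : Disjoint F (U ⊔ X) := by
  rw [Submodule.disjoint_def]
  intro y hyF hy
  obtain ⟨a, ha, x, hx, rfl⟩ := Submodule.mem_sup.1 hy
  by_contra hy0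
  have ha0 : a ≠ 0 := by
    rintro rfl
    exact hy0 (Submodule.disjoint_def.1 hFX _ hyF (by simpa using hx))
  obtain ⟨r, hra, hry⟩ := hsep F hF hFU _ hyF hy0 a ha ha0
  refine hry (Submodule.disjoint_def.1 hFX _ (F.smul_mem r hyF) ?_)
  rw [smul_add, hra, zero_add]
  exact X.smul_mem r hx

theorem disjoint_of_adjP (huni : UniformSubmodule U)
    (hCuniq : ∀ D, IsComplementOf D U → D = C) [IsSemisimpleModule R C]
    (hsep : AnnihilatorSeparates U) (hX : AdjP U X) : Disjoint U X := by
  by_contra hUX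
  obtain ⟨B, hB, hXB⟩ : ∃ B, B ≠ ⊥ ∧ X ⊓ B = ⊥ := by
    simpa [IsEssentialSubmodule] using hX.2.1.2.2
  have hUB : Disjoint U B := by
    rw [disjoint_iff]
    by_contra hUB
    refine huni.2 _ _ inf_le_left inf_le_left hUB (disjoint_iff.not.1 hUX) (le_bot_iff.1 ?_)
    exact hXB ▸ le_inf (inf_le_right.trans inf_le_right) (inf_le_left.trans inf_le_right)
  obtain ⟨D, hBD, hD⟩ := exists_isComplementOf_ge hUB
  obtain ⟨F, hFB, hF⟩ := exists_isAtom_le_of_isSemisimpleModule (hCuniq D hD ▸ hBD) hB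
  have hFU : ¬ F ≤ U := fun h => hF.1 (disjoint_self.1 (hUB.mono h hFB))
  have hFX : Disjoint F X := (disjoint_iff.2 hXB).symm.mono_left hFB
  exact hX.2.2.2 F hF.1 (inf_comm (U ⊔ X) F ▸ (hsep.disjoint_sup hF hFU hFX).eq_bot)

end Converse

/-- A vertex `U` of `N(M)` has degree 1 iff (i) `U` is uniform and its
complement in `M` is unique and semisimple, and (ii) for every simple submodule
`F ⊄ U`, every nonzero `f ∈ F` and every nonzero `u ∈ U` there is `r ∈ R` with
`r • u = 0` and `r • f ≠ 0`. -/
theorem stmt13 (U : Submodule R M) (hU : IsVertexP U) :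
    (∃! C, AdjP U C) ↔
      ((UniformSubmodule U ∧ (∃! C, IsComplementOf C U) ∧
          (∀ C : Submodule R M, IsComplementOf C U → IsSemisimpleModule R ↥C)) ∧
       (∀ F : Submodule R M, IsAtom F → ¬ F ≤ U →
          ∀ f ∈ F, f ≠ 0 → ∀ u ∈ U, u ≠ 0 →
            ∃ r : R, r • u = 0 ∧ r • f ≠ 0)) := by
  obtain ⟨C, -, hC⟩ := exists_isComplementOf_ge (U := U) disjoint_bot_right
  constructor
  · rintro ⟨X, -, hX⟩
    have huniq : ∀ Y, AdjP U Y → Y = C := fun Y hY => (hX Y hY).trans (hX C (hC.adjP hU)).symm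
    have hCuniq : ∀ D, IsComplementOf D U → D = C := fun D hD => huniq D (hD.adjP hU)
    refine ⟨⟨uniformSubmodule_of_forall_adjP_eq hU hC huniq, ⟨C, hC, hCuniq⟩, ?_⟩,
      annihilatorSeparates_of_forall_adjP_eq hU hC huniq⟩
    rintro D hD
    obtain rfl := hCuniq D hD
    exact isSemisimpleModule_of_forall_adjP_eq hU hC huniq
  · rintro ⟨⟨huni, hCuniq, hss⟩, hsep⟩
    have hCuniq' : ∀ D, IsComplementOf D U → D = C := fun D hD => hCuniq.unique hD hC
    have := hss C hC
    exact ⟨C, hC.adjP hU, fun X hX =>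
      eq_of_adjP_of_disjoint hC hCuniq' hX (disjoint_of_adjP huni hCuniq' hsep hX)⟩
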